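/- Let d be a smooth function on an open set of ℝⁿ with |∇d| = 1. Then the second normal derivative of the Laplacian satisfies (∇d · ∇)(∇d · ∇(Δd)) = 2 Tr[(∇²d)³]. -/

import Mathlib

/-
Differentiating the eikonal equation `|∇d|² = 1` once gives `∇²d ∇d = 0`; differentiating
again and using the symmetry of third derivatives gives `∇_N ∇²d = -(∇²d)²`. Taking traces,
`∇_N Δd = -Tr (∇²d)²`, and the Leibniz rule then gives
`∇_N ∇_N Δd = -Tr (∇_N ∇²d · ∇²d + ∇²d · ∇_N ∇²d) = 2 Tr (∇²d)³`.
-/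

open scoped BigOperators

/-- Partial derivative in direction `i`. -/
noncomputable def pd {n : ℕ} (i : Fin n) (f : (Fin n → ℝ) → ℝ) : (Fin n → ℝ) → ℝ :=
  fun x => fderiv ℝ f x (Pi.single i 1)

/-- Laplacian. -/
noncomputable def lap {n : ℕ} (f : (Fin n → ℝ) → ℝ) : (Fin n → ℝ) → ℝ :=
  fun x => ∑ i, pd i (pd i f) x

/-- Hessian matrix. -/
noncomputable def hess {n : ℕ} (f : (Fin n → ℝ) → ℝ) (x : Fin n → ℝ) :
    Matrix (Fin n) (Fin n) ℝ :=
  Matrix.of fun i j => pd i (pd j f) x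

/-- Normal derivative operator `∇d · ∇`. -/
noncomputable def normalDeriv {n : ℕ} (d f : (Fin n → ℝ) → ℝ) : (Fin n → ℝ) → ℝ :=
  fun x => ∑ i, pd i d x * pd i f x

open Finset Matrix Set

section Leibniz

variable {E : Type*} [NormedAddCommGroup E] [NormedSpace ℝ E]

lemma fderiv_eq_of_eqOn {U : Set E} {f g : E → ℝ} (hU : IsOpen U) (h : EqOn f g U) {x : E}
    (hx : x ∈ U) : fderiv ℝ f x = fderiv ℝ g x :=
  (Filter.eventuallyEq_of_mem (hU.mem_nhds hx) h).fderiv_eq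

lemma fderiv_sum_mul_apply {ι : Type*} [Fintype ι] {f g : ι → E → ℝ} {x : E}
    (hf : ∀ i, DifferentiableAt ℝ (f i) x) (hg : ∀ i, DifferentiableAt ℝ (g i) x) (v : E) :
    fderiv ℝ (fun y => ∑ i, f i y * g i y) x v
      = ∑ i, (fderiv ℝ (f i) x v * g i x + f i x * fderiv ℝ (g i) x v) := by
  rw [fderiv_fun_sum (u := univ) (A := fun i y => f i y * g i y) fun i _ => (hf i).mul (hg i),
    _root_.sum_apply]
  refine sum_congr rfl fun i _ => ?_
  rw [fderiv_fun_mul (hf i) (hg i)]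
  simp only [_root_.add_apply, _root_.smul_apply, smul_eq_mul]
  ring

lemma fderiv_trace_mul_apply {m k : Type*} [Fintype m] [Fintype k]
    {A : E → Matrix m k ℝ} {B : E → Matrix k m ℝ} {x : E}
    (hA : ∀ i j, DifferentiableAt ℝ (fun y => A y i j) x)
    (hB : ∀ i j, DifferentiableAt ℝ (fun y => B y i j) x) (v : E) :
    fderiv ℝ (fun y => trace (A y * B y)) x v
      = trace (of (fun i j => fderiv ℝ (fun y => A y i j) x v) * B x)
        + trace (A x * of (fun i j => fderiv ℝ (fun y => B y i j) x v)) := by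
  have htr : ∀ (A : Matrix m k ℝ) (B : Matrix k m ℝ),
      trace (A * B) = ∑ p : m × k, A p.1 p.2 * B p.2 p.1 := fun A B => by
    simp only [Matrix.trace, Matrix.diag, mul_apply, Fintype.sum_prod_type]
  simp only [htr, of_apply]
  exact (fderiv_sum_mul_apply (f := fun (p : m × k) y => A y p.1 p.2)
    (g := fun (p : m × k) y => B y p.2 p.1)
    (fun p => hA p.1 p.2) (fun p => hB p.2 p.1) v).trans sum_add_distrib

end Leibniz

section PartialDerivatives

variable {n : ℕ} {U : Set (Fin n → ℝ)} {f : (Fin n → ℝ) → ℝ} {x : Fin n → ℝ}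

noncomputable def grad (f : (Fin n → ℝ) → ℝ) (x : Fin n → ℝ) : Fin n → ℝ :=
  fun i => pd i f x

lemma normalDeriv_eq_fderiv (d f : (Fin n → ℝ) → ℝ) (x : Fin n → ℝ) :
    normalDeriv d f x = fderiv ℝ f x (grad d x) := by
  conv_rhs => rw [← univ_sum_single (grad d x)]
  simp only [map_sum, normalDeriv, pd, grad]
  refine sum_congr rfl fun i _ => ?_
  rw [← smul_eq_mul, ← map_smul]
  congr 1
  ext j
  simp [Pi.single_apply]

lemma ContDiffOn.pd_of_isOpen {m k : WithTop ℕ∞} (hf : ContDiffOn ℝ m f U) (hU : IsOpen U)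
    (hk : k + 1 ≤ m) (i : Fin n) : ContDiffOn ℝ k (pd i f) U :=
  (hf.fderiv_of_isOpen hU hk).clm_apply contDiffOn_const

lemma pd_comm (hU : IsOpen U) (hf : ContDiffOn ℝ 2 f U) (hx : x ∈ U) (i j : Fin n) :
    pd i (pd j f) x = pd j (pd i f) x := by
  have hsymm : IsSymmSndFDerivAt ℝ f x :=
    (hf.contDiffAt (hU.mem_nhds hx)).isSymmSndFDerivAt (by simp)
  have hdf : DifferentiableAt ℝ (fderiv ℝ f) x :=
    ((hf.fderiv_of_isOpen hU (m := 1) (by norm_num)).contDiffAt (hU.mem_nhds hx)).differentiableAt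
      one_ne_zero
  have hsnd : ∀ v w : Fin n → ℝ,
      fderiv ℝ (fun y => fderiv ℝ f y w) x v = fderiv ℝ (fderiv ℝ f) x v w := fun v w => by
    rw [fderiv_clm_apply hdf (differentiableAt_const w)]
    simp
  show fderiv ℝ (fun y => fderiv ℝ f y (Pi.single j 1)) x (Pi.single i 1)
    = fderiv ℝ (fun y => fderiv ℝ f y (Pi.single i 1)) x (Pi.single j 1)
  rw [hsnd, hsnd, hsymm.eq]

lemma fderiv_single_eq_pd (f : (Fin n → ℝ) → ℝ) (x : Fin n → ℝ) (i : Fin n) :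
    fderiv ℝ f x (Pi.single i 1) = pd i f x :=
  rfl

lemma ContDiffOn.differentiableAt_pd {m : WithTop ℕ∞} (hf : ContDiffOn ℝ m f U)
    (hU : IsOpen U) (hm : 2 ≤ m) (hx : x ∈ U) (i : Fin n) : DifferentiableAt ℝ (pd i f) x :=
  ((hf.pd_of_isOpen hU (k := 1) (by simpa [one_add_one_eq_two] using hm) i).contDiffAt
    (hU.mem_nhds hx)).differentiableAt one_ne_zero

lemma pd_pd_pd_comm (hU : IsOpen U) (hf : ContDiffOn ℝ 3 f U) (hx : x ∈ U) (i j k : Fin n) :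
    pd i (pd j (pd k f)) x = pd k (pd j (pd i f)) x := by
  have hf2 : ∀ l, ContDiffOn ℝ 2 (pd l f) U := fun l => hf.pd_of_isOpen hU (by norm_num) l
  calc pd i (pd j (pd k f)) x = pd j (pd i (pd k f)) x := pd_comm hU (hf2 k) hx i j
    _ = pd j (pd k (pd i f)) x := DFunLike.congr_fun (fderiv_eq_of_eqOn hU
          (fun y hy => pd_comm hU (hf.of_le (by norm_num)) hy i k) hx) _
    _ = pd k (pd j (pd i f)) x := pd_comm hU (hf2 i) hx j k

end PartialDerivatives

section Eikonal

variable {n : ℕ} {U : Set (Fin n → ℝ)} {d : (Fin n → ℝ) → ℝ} {x : Fin n → ℝ}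

lemma hess_mulVec_grad (hU : IsOpen U) (hd : ContDiffOn ℝ 2 d U)
    (heik : ∀ x ∈ U, ∑ i, (pd i d x) ^ 2 = 1) (hx : x ∈ U) :
    hess d x *ᵥ grad d x = 0 := by
  have hN : ∀ i, DifferentiableAt ℝ (pd i d) x := hd.differentiableAt_pd hU le_rfl hx
  ext j
  have h0 := DFunLike.congr_fun (fderiv_eq_of_eqOn hU (g := fun _ => 1)
    (fun y hy => by simpa only [sq] using heik y hy) hx) (Pi.single j 1)
  rw [fderiv_sum_mul_apply hN hN, fderiv_fun_const] at h0
  have hdouble : ∑ i, (pd j (pd i d) x * pd i d x + pd i d x * pd j (pd i d) x)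
      = 2 * (hess d x *ᵥ grad d x) j := by
    simp only [mulVec, dotProduct, hess, of_apply, grad, mul_sum]
    exact sum_congr rfl fun i _ => by ring
  simp only [fderiv_single_eq_pd, hdouble] at h0
  simpa using h0

lemma normalDeriv_pd_pd (hU : IsOpen U) (hd : ContDiffOn ℝ 3 d U)
    (heik : ∀ x ∈ U, ∑ i, (pd i d x) ^ 2 = 1) (hx : x ∈ U) (j k : Fin n) :
    normalDeriv d (pd j (pd k d)) x = -(hess d x * hess d x) j k := by
  have hd2 : ContDiffOn ℝ 2 d U := hd.of_le (by norm_num)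
  have hHN : EqOn (fun y => ∑ i, pd j (pd i d) y * pd i d y) (fun _ => 0) U :=
    fun y hy => congrFun (hess_mulVec_grad hU hd2 heik hy) j
  have h0 := DFunLike.congr_fun (fderiv_eq_of_eqOn hU hHN hx) (Pi.single k 1)
  rw [fderiv_sum_mul_apply
      (fun i => (hd.pd_of_isOpen hU (by norm_num) i).differentiableAt_pd hU le_rfl hx j)
      (hd.differentiableAt_pd hU (by norm_num) hx), fderiv_fun_const] at h0
  simp only [fderiv_single_eq_pd, sum_add_distrib] at h0
  have hthird : ∑ i, pd k (pd j (pd i d)) x * pd i d x = normalDeriv d (pd j (pd k d)) x :=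
    sum_congr rfl fun i _ => by rw [pd_pd_pd_comm hU hd hx k j i, mul_comm]
  have hsq : ∑ i, pd j (pd i d) x * pd k (pd i d) x = (hess d x * hess d x) j k :=
    sum_congr rfl fun i _ => by rw [pd_comm hU hd2 hx k i]; rfl
  rw [hthird, hsq] at h0
  simp only [Pi.zero_apply, _root_.zero_apply] at h0
  linarith

lemma normalDeriv_lap (hU : IsOpen U) (hd : ContDiffOn ℝ 3 d U)
    (heik : ∀ x ∈ U, ∑ i, (pd i d x) ^ 2 = 1) (hx : x ∈ U) :
    normalDeriv d (lap d) x = -trace (hess d x * hess d x) := by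
  rw [normalDeriv_eq_fderiv]
  unfold lap
  rw [fderiv_fun_sum fun i _ =>
      (hd.pd_of_isOpen hU (by norm_num) i).differentiableAt_pd hU le_rfl hx i, _root_.sum_apply]
  simp only [← normalDeriv_eq_fderiv, normalDeriv_pd_pd hU hd heik hx, Matrix.trace, Matrix.diag,
    sum_neg_distrib]

end Eikonal

theorem stmt_2 {n : ℕ} (U : Set (Fin n → ℝ)) (hU : IsOpen U)
    (d : (Fin n → ℝ) → ℝ) (hd : ContDiffOn ℝ 4 d U)
    (heik : ∀ x ∈ U, ∑ i, (pd i d x) ^ 2 = 1) :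
    ∀ x ∈ U, normalDeriv d (normalDeriv d (lap d)) x
      = 2 * Matrix.trace (hess d x * hess d x * hess d x) := by
  intro x hx
  set H := hess d x
  have hd3 : ContDiffOn ℝ 3 d U := hd.of_le (by norm_num)
  have hH : ∀ i j, DifferentiableAt ℝ (fun y => hess d y i j) x := fun i j =>
    (hd3.pd_of_isOpen hU (by norm_num) j).differentiableAt_pd hU le_rfl hx i
  have hDH : of (fun i j => fderiv ℝ (fun y => hess d y i j) x (grad d x))
      = -(H * H) := by
    ext i j
    exact (normalDeriv_eq_fderiv _ _ _).symm.trans (normalDeriv_pd_pd hU hd3 heik hx i j)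
  calc normalDeriv d (normalDeriv d (lap d)) x
      = -fderiv ℝ (fun y => trace (hess d y * hess d y)) x (grad d x) := by
        rw [normalDeriv_eq_fderiv,
          fderiv_eq_of_eqOn hU (fun y hy => normalDeriv_lap hU hd3 heik hy) hx, fderiv_fun_neg]
        rfl
    _ = -(trace (-(H * H) * H) + trace (H * -(H * H))) := by
        rw [fderiv_trace_mul_apply hH hH, hDH]
    _ = 2 * trace (H * H * H) := by
        simp only [neg_mul, mul_neg, trace_neg, Matrix.mul_assoc]
        ring
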